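/- arXiv:1512.01143 — 2 statements merged into one kernel-verified Lean document; each statement's English description precedes it below -/
import Mathlib

section
/- Let (X,T) be a topological dynamical system and 𝒰 a finite open cover, with coefficients c_S^n = 2^{-n}. Then the average configuration complexity satisfies Acc(X,𝒰,T) = (1/2)·Asc(X,𝒰,T), where Acc(X,𝒰,T) = lim_n (1/n) 2^{-n} Σ_{S ⊆ {0,...,n-1}, 0 ∈ S} log N(𝒰_S) and Asc(X,𝒰,T) = lim_n (1/n) 2^{-n} Σ_{S ⊆ {0,...,n-1}} log N(𝒰_S). -/
/-!
A configuration containing `0` is `{0} ∪ S` with `0 ∉ S`, and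
`N(𝒰_S) ≤ N(𝒰_{{0} ∪ S}) ≤ N(𝒰) · N(𝒰_S)`. Pairing each configuration containing `0` with its
partner without `0`, the two halves of `∑_S log N(𝒰_S)` therefore differ by at most
`2^(n-1) log N(𝒰)`, which vanishes after dividing by `n 2^n`.
-/

open Filter Topology

/-- Minimal cardinality of a finite subcover of the family `U` covering all of `X`. -/
noncomputable def coverN {X : Type*} (U : Set (Set X)) : ℕ :=
  sInf {m : ℕ | ∃ V : Finset (Set X),
    ↑V ⊆ U ∧ V.card = m ∧ ⋃₀ (V : Set (Set X)) = Set.univ}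

/-- The join `𝒰_S = ⋁_{i ∈ S} T^{-i} 𝒰`. -/
def coverJoin {X : Type*} (T : X → X) (U : Set (Set X)) (S : Finset ℕ) : Set (Set X) :=
  {A | ∃ f : ℕ → Set X, (∀ i ∈ S, f i ∈ U) ∧ A = ⋂ i ∈ S, T^[i] ⁻¹' f i}

section CoverN

variable {X : Type*}

lemma coverN_le_card {W : Set (Set X)} {V : Finset (Set X)} (hVW : ↑V ⊆ W)
    (hV : ⋃₀ (V : Set (Set X)) = Set.univ) : coverN W ≤ V.card :=
  Nat.sInf_le ⟨V, hVW, rfl, hV⟩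

variable [TopologicalSpace X] [CompactSpace X]

lemma exists_finset_card_eq_coverN {W : Set (Set X)} (hWopen : ∀ A ∈ W, IsOpen A)
    (hWcov : ⋃₀ W = Set.univ) :
    ∃ V : Finset (Set X), ↑V ⊆ W ∧ V.card = coverN W ∧ ⋃₀ (V : Set (Set X)) = Set.univ := by
  obtain ⟨V, hVW, hVfin, hV⟩ := isCompact_univ.elim_finite_subcover_image (c := id) hWopen
    (by simpa [← Set.sUnion_eq_biUnion] using hWcov.ge)
  have hsub : {m : ℕ | ∃ V : Finset (Set X),
      ↑V ⊆ W ∧ V.card = m ∧ ⋃₀ (V : Set (Set X)) = Set.univ}.Nonempty :=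
    ⟨_, hVfin.toFinset, by simpa using hVW, rfl,
      by simpa [Set.sUnion_eq_biUnion, Set.univ_subset_iff] using hV⟩
  exact Nat.sInf_mem hsub

lemma coverN_le_of_refines {W W' : Set (Set X)} (hW'open : ∀ A ∈ W', IsOpen A)
    (hW'cov : ⋃₀ W' = Set.univ) (hrefine : ∀ A ∈ W', ∃ B ∈ W, A ⊆ B) :
    coverN W ≤ coverN W' := by
  obtain ⟨V', hV'W', hcard, hV'⟩ := exists_finset_card_eq_coverN hW'open hW'cov
  choose! g hgW hg using hrefine
  have hcov : ⋃₀ ((V'.image g : Finset (Set X)) : Set (Set X)) = Set.univ := by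
    refine Set.eq_univ_of_forall fun x => ?_
    obtain ⟨A, hA, hxA⟩ := Set.mem_sUnion.1 (hV' ▸ Set.mem_univ x)
    exact ⟨g A, Finset.mem_image_of_mem g hA, hg A (hV'W' hA) hxA⟩
  calc coverN W ≤ (V'.image g).card :=
        coverN_le_card (by
          rw [Finset.coe_image, Set.image_subset_iff]
          exact fun A hA => hgW A (hV'W' hA)) hcov
    _ ≤ V'.card := Finset.card_image_le
    _ = coverN W' := hcard

lemma coverN_le_mul {W W₁ W₂ : Set (Set X)}
    (hW₁open : ∀ A ∈ W₁, IsOpen A) (hW₁cov : ⋃₀ W₁ = Set.univ)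
    (hW₂open : ∀ A ∈ W₂, IsOpen A) (hW₂cov : ⋃₀ W₂ = Set.univ)
    (hinter : ∀ A ∈ W₁, ∀ B ∈ W₂, A ∩ B ∈ W) :
    coverN W ≤ coverN W₁ * coverN W₂ := by
  obtain ⟨V₁, hV₁W₁, hcard₁, hV₁⟩ := exists_finset_card_eq_coverN hW₁open hW₁cov
  obtain ⟨V₂, hV₂W₂, hcard₂, hV₂⟩ := exists_finset_card_eq_coverN hW₂open hW₂cov
  have hsub : ↑(Finset.image₂ (· ∩ ·) V₁ V₂) ⊆ W := by
    simpa [Set.image2_subset_iff] using fun A hA B hB => hinter A (hV₁W₁ hA) B (hV₂W₂ hB)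
  have hcov : ⋃₀ ((Finset.image₂ (· ∩ ·) V₁ V₂ : Finset (Set X)) : Set (Set X)) = Set.univ := by
    refine Set.eq_univ_of_forall fun x => ?_
    obtain ⟨A, hA, hxA⟩ := Set.mem_sUnion.1 (hV₁ ▸ Set.mem_univ x)
    obtain ⟨B, hB, hxB⟩ := Set.mem_sUnion.1 (hV₂ ▸ Set.mem_univ x)
    exact ⟨A ∩ B, Finset.mem_image₂_of_mem hA hB, hxA, hxB⟩
  calc coverN W ≤ (Finset.image₂ (· ∩ ·) V₁ V₂).card := coverN_le_card hsub hcov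
    _ ≤ V₁.card * V₂.card := Finset.card_image₂_le _ _ _
    _ = coverN W₁ * coverN W₂ := by rw [hcard₁, hcard₂]

end CoverN

section CoverJoin

variable {X : Type*} {T : X → X} {U : Set (Set X)}

lemma isOpen_of_mem_coverJoin [TopologicalSpace X] (hT : Continuous T)
    (hUopen : ∀ A ∈ U, IsOpen A) {S : Finset ℕ} {A : Set X} (hA : A ∈ coverJoin T U S) :
    IsOpen A := by
  obtain ⟨f, hf, rfl⟩ := hA
  exact isOpen_biInter_finset fun i hi => (hUopen _ (hf i hi)).preimage (hT.iterate i)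

lemma sUnion_coverJoin (hUcov : ⋃₀ U = Set.univ) (S : Finset ℕ) :
    ⋃₀ coverJoin T U S = Set.univ := by
  refine Set.eq_univ_of_forall fun x => ?_
  choose f hfU hfx using fun i : ℕ => Set.mem_sUnion.1 (hUcov ▸ Set.mem_univ (T^[i] x))
  exact ⟨_, ⟨f, fun i _ => hfU i, rfl⟩, Set.mem_iInter₂.2 fun i _ => hfx i⟩

lemma exists_superset_mem_coverJoin {S S' : Finset ℕ} (hSS' : S ⊆ S') {A : Set X}
    (hA : A ∈ coverJoin T U S') : ∃ B ∈ coverJoin T U S, A ⊆ B := by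
  obtain ⟨f, hf, rfl⟩ := hA
  exact ⟨_, ⟨f, fun i hi => hf i (hSS' hi), rfl⟩, Set.biInter_subset_biInter_left hSS'⟩

lemma inter_mem_coverJoin_union {S S' : Finset ℕ} (hSS' : Disjoint S S') {A B : Set X}
    (hA : A ∈ coverJoin T U S) (hB : B ∈ coverJoin T U S') : A ∩ B ∈ coverJoin T U (S ∪ S') := by
  obtain ⟨f, hf, rfl⟩ := hA
  obtain ⟨g, hg, rfl⟩ := hB
  have hg_eq : ∀ i ∈ S', S.piecewise f g i = g i := fun i hi =>
    S.piecewise_eq_of_notMem f g (Finset.disjoint_right.1 hSS' hi)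
  refine ⟨S.piecewise f g, fun i hi => ?_, ?_⟩
  · rcases Finset.mem_union.1 hi with hi | hi
    · simpa [S.piecewise_eq_of_mem f g hi] using hf i hi
    · simpa [hg_eq i hi] using hg i hi
  · rw [Finset.set_biInter_inter]
    congr 1
    · exact Set.iInter₂_congr fun i hi => by rw [S.piecewise_eq_of_mem f g hi]
    · exact Set.iInter₂_congr fun i hi => by rw [hg_eq i hi]

variable [TopologicalSpace X] [CompactSpace X]

lemma coverN_coverJoin_mono (hT : Continuous T) (hUopen : ∀ A ∈ U, IsOpen A)
    (hUcov : ⋃₀ U = Set.univ) {S S' : Finset ℕ} (hSS' : S ⊆ S') :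
    coverN (coverJoin T U S) ≤ coverN (coverJoin T U S') :=
  coverN_le_of_refines (fun _ => isOpen_of_mem_coverJoin hT hUopen) (sUnion_coverJoin hUcov S')
    fun _ => exists_superset_mem_coverJoin hSS'

lemma coverN_coverJoin_union_le (hT : Continuous T) (hUopen : ∀ A ∈ U, IsOpen A)
    (hUcov : ⋃₀ U = Set.univ) {S S' : Finset ℕ} (hSS' : Disjoint S S') :
    coverN (coverJoin T U (S ∪ S')) ≤ coverN (coverJoin T U S) * coverN (coverJoin T U S') :=
  coverN_le_mul (fun _ => isOpen_of_mem_coverJoin hT hUopen) (sUnion_coverJoin hUcov S)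
    (fun _ => isOpen_of_mem_coverJoin hT hUopen) (sUnion_coverJoin hUcov S')
    fun _ hA _ hB => inter_mem_coverJoin_union hSS' hA hB

end CoverJoin

-- Both log lemmas also cover `m = 0`, where `Real.log 0 = 0` (the case of an empty space).
lemma Real.log_natCast_le_log_natCast {m n : ℕ} (h : m ≤ n) : Real.log m ≤ Real.log n := by
  rcases m.eq_zero_or_pos with rfl | hm
  · simpa using Real.log_natCast_nonneg n
  · exact Real.log_le_log (by exact_mod_cast hm) (by exact_mod_cast h)

lemma Real.log_natCast_le_add_of_le_mul {m a b : ℕ} (h : m ≤ a * b) :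
    Real.log m ≤ Real.log a + Real.log b := by
  rcases m.eq_zero_or_pos with rfl | hm
  · simpa using add_nonneg (Real.log_natCast_nonneg a) (Real.log_natCast_nonneg b)
  · obtain ⟨ha, hb⟩ : a ≠ 0 ∧ b ≠ 0 := mul_ne_zero_iff.1 (by omega)
    rw [← Real.log_mul (by exact_mod_cast ha) (by exact_mod_cast hb)]
    exact_mod_cast Real.log_natCast_le_log_natCast h

section PowersetSum

variable {α : Type*} [DecidableEq α] {s : Finset α} {a : α}

lemma Finset.sum_filter_mem_powerset_eq {M : Type*} [AddCommMonoid M] (ha : a ∈ s)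
    (f : Finset α → M) :
    ∑ t ∈ s.powerset.filter (a ∈ ·), f t = ∑ t ∈ s.powerset.filter (a ∉ ·), f (insert a t) := by
  refine Finset.sum_nbij' (fun t => t.erase a) (insert a) (fun t ht => ?_) (fun t ht => ?_)
    (fun t ht => ?_) (fun t ht => ?_) (fun t ht => ?_) <;>
    simp only [Finset.mem_filter, Finset.mem_powerset] at ht ⊢
  · exact ⟨(Finset.erase_subset a t).trans ht.1, Finset.notMem_erase a t⟩
  · exact ⟨Finset.insert_subset ha ht.1, Finset.mem_insert_self a t⟩
  · exact Finset.insert_erase ht.2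
  · exact Finset.erase_insert ht.2
  · rw [Finset.insert_erase ht.2]

lemma two_mul_sum_filter_mem_sub_sum_mem_Icc (ha : a ∈ s) {f : Finset α → ℝ} {L : ℝ}
    (hmono : ∀ t, a ∉ t → f t ≤ f (insert a t))
    (hsub : ∀ t, a ∉ t → f (insert a t) ≤ L + f t) :
    2 * ∑ t ∈ s.powerset.filter (a ∈ ·), f t - ∑ t ∈ s.powerset, f t ∈
      Set.Icc 0 (2 ^ s.card * L) := by
  have hL : 0 ≤ L := by linarith [hmono ∅ (Finset.notMem_empty a), hsub ∅ (Finset.notMem_empty a)]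
  set Q := s.powerset.filter (a ∉ ·)
  have hdiff : 2 * ∑ t ∈ s.powerset.filter (a ∈ ·), f t - ∑ t ∈ s.powerset, f t =
      ∑ t ∈ Q, (f (insert a t) - f t) := by
    rw [← Finset.sum_filter_add_sum_filter_not s.powerset (a ∈ ·),
      Finset.sum_filter_mem_powerset_eq ha, Finset.sum_sub_distrib]
    ring
  have hQ : (Q.card : ℝ) ≤ 2 ^ s.card := by
    exact_mod_cast (Finset.card_filter_le _ _).trans (Finset.card_powerset s).le
  rw [hdiff]
  refine ⟨Finset.sum_nonneg fun t ht => sub_nonneg.2 (hmono t (Finset.mem_filter.1 ht).2), ?_⟩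
  calc ∑ t ∈ Q, (f (insert a t) - f t) ≤ ∑ _t ∈ Q, L :=
        Finset.sum_le_sum fun t ht => by linarith [hsub t (Finset.mem_filter.1 ht).2]
    _ = Q.card * L := by rw [Finset.sum_const, nsmul_eq_mul]
    _ ≤ 2 ^ s.card * L := mul_le_mul_of_nonneg_right hQ hL

end PowersetSum

lemma tendsto_div_two_of_two_mul_sub_mem_Icc {a b : ℕ → ℝ} {A L : ℝ}
    (ha : Tendsto (fun n : ℕ => (1 / n : ℝ) * (2 ^ n : ℝ)⁻¹ * a n) atTop (𝓝 A))
    (hab : ∀ᶠ n in atTop, 2 * b n - a n ∈ Set.Icc 0 (2 ^ n * L)) :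
    Tendsto (fun n : ℕ => (1 / n : ℝ) * (2 ^ n : ℝ)⁻¹ * b n) atTop (𝓝 (A / 2)) := by
  have herr : Tendsto (fun n : ℕ => (1 / n : ℝ) * (2 ^ n : ℝ)⁻¹ * (2 * b n - a n))
      atTop (𝓝 0) := by
    refine squeeze_zero' (hab.mono fun n hn => by have := hn.1; positivity)
      (hab.mono fun n hn => ?_) (tendsto_const_div_atTop_nhds_zero_nat L)
    calc (1 / n : ℝ) * (2 ^ n : ℝ)⁻¹ * (2 * b n - a n)
        ≤ (1 / n : ℝ) * (2 ^ n : ℝ)⁻¹ * (2 ^ n * L) := by gcongr; exact hn.2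
      _ = L / n := by field_simp
  convert (ha.add herr).div_const 2 using 1
  · funext n
    ring
  · simp

theorem acc_eq_half_asc_general {X : Type*} [TopologicalSpace X] [CompactSpace X]
    (T : X → X) (hT : Continuous T)
    (U : Set (Set X)) (hUopen : ∀ A ∈ U, IsOpen A)
    (hUcov : ⋃₀ U = Set.univ)
    (A : ℝ)
    (hA : Tendsto (fun n : ℕ =>
        (1 / n : ℝ) * (2 ^ n : ℝ)⁻¹ * ∑ S ∈ (Finset.range n).powerset,
          Real.log (coverN (coverJoin T U S))) atTop (𝓝 A)) :
    Tendsto (fun n : ℕ =>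
        (1 / n : ℝ) * (2 ^ n : ℝ)⁻¹ *
          ∑ S ∈ (Finset.range n).powerset.filter (fun S => 0 ∈ S),
            Real.log (coverN (coverJoin T U S))) atTop (𝓝 (A / 2)) := by
  set ℓ : Finset ℕ → ℝ := fun S => Real.log (coverN (coverJoin T U S))
  have hmono : ∀ S, 0 ∉ S → ℓ S ≤ ℓ (insert 0 S) := fun S _ =>
    Real.log_natCast_le_log_natCast
      (coverN_coverJoin_mono hT hUopen hUcov (Finset.subset_insert 0 S))
  have hsub : ∀ S, 0 ∉ S → ℓ (insert 0 S) ≤ ℓ {0} + ℓ S := fun S hS => by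
    rw [Finset.insert_eq]
    exact Real.log_natCast_le_add_of_le_mul
      (coverN_coverJoin_union_le hT hUopen hUcov (Finset.disjoint_singleton_left.2 hS))
  refine tendsto_div_two_of_two_mul_sub_mem_Icc hA (L := ℓ {0}) ?_
  filter_upwards [eventually_ge_atTop 1] with n hn
  simpa using two_mul_sum_filter_mem_sub_sum_mem_Icc (Finset.mem_range.2 hn) hmono hsub

/-- With uniform coefficients `c_S^n = 2^{-n}`, the average configuration
complexity (the average restricted to subsets containing `0`) equals one half of the
average sample complexity: `Acc(X,𝒰,T) = (1/2)·Asc(X,𝒰,T)`. -/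
theorem acc_eq_half_asc {X : Type*} [TopologicalSpace X] [CompactSpace X]
    (T : X → X) (hT : Continuous T)
    (U : Set (Set X)) (hUfin : U.Finite) (hUopen : ∀ A ∈ U, IsOpen A)
    (hUcov : ⋃₀ U = Set.univ)
    (A : ℝ)
    (hA : Tendsto (fun n : ℕ =>
        (1 / n : ℝ) * (2 ^ n : ℝ)⁻¹ * ∑ S ∈ (Finset.range n).powerset,
          Real.log (coverN (coverJoin T U S))) atTop (𝓝 A)) :
    Tendsto (fun n : ℕ =>
        (1 / n : ℝ) * (2 ^ n : ℝ)⁻¹ *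
          ∑ S ∈ (Finset.range n).powerset.filter (fun S => 0 ∈ S),
            Real.log (coverN (coverJoin T U S))) atTop (𝓝 (A / 2)) :=
  acc_eq_half_asc_general T hT U hUopen hUcov A hA
end

section
/- Let (X,ℬ,μ,T) be a measure-preserving system with c_S^n = 2^{-n}. Then sup_α Asc_μ(X,α,T) = h_μ(X,T), where the supremum is over all finite measurable partitions α and h_μ denotes Kolmogorov–Sinai entropy. Consequently sup_α Int_μ(X,α,T) = h_μ(X,T), where Int_μ(X,α,T) = 2·Asc_μ(X,α,T) − h_μ(X,α,T). -/
/-!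
Since `α_S` is coarser than `α_{0,…,n-1}` for `S ⊆ {0,…,n-1}`, `Asc_μ(α) ≤ h_μ(α)` for every
partition. Conversely, for the refinement `α_{k*}` one has `H_μ((α_{k*})_S) = H_μ(α_{S+k*})`, and
`S + k*` misses on average at most `k + n/2^k` points of `{0,…,n-1}`, each costing at most
`H_μ(α)`; hence `Asc_μ(α_{k*}) ≥ h_μ(α) - H_μ(α)/2^k`, while `h_μ(α_{k*}) ≤ h_μ(α)`. Both
`n ↦ H_μ(α_{0,…,n-1})` and `n ↦ 2^{-n} ∑_S H_μ(α_S)` are subadditive, so by Fekete's lemma the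
infima defining `h_μ` and `Asc_μ` are limits, and these estimates pass to the limit.
-/

open MeasureTheory

/-- Shannon entropy of the finite partition of `X` given by the fibers of `β`. -/
noncomputable def partEnt {X κ : Type*} [MeasurableSpace X] [Fintype κ]
    (μ : Measure X) (β : X → κ) : ℝ :=
  ∑ c : κ, Real.negMulLog ((μ (β ⁻¹' {c})).toReal)

/-- The entropy `H_μ(α_S)` of the partition `α_S = ⋁_{i ∈ S} T^{-i} α`. -/
noncomputable def HS {X ι : Type*} [MeasurableSpace X] [Fintype ι]
    (μ : Measure X) (T : X → X) (α : X → ι) (S : Finset ℕ) : ℝ :=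
  partEnt μ (fun x => fun i : {i // i ∈ S} => α (T^[(i : ℕ)] x))

/-- `Asc_μ(X,α,T)` with `c_S^n = 2^{-n}` (the limit equals the infimum by
subadditivity). -/
noncomputable def ascMu {X ι : Type*} [MeasurableSpace X] [Fintype ι]
    (μ : Measure X) (T : X → X) (α : X → ι) : ℝ :=
  ⨅ n : ℕ+, (2 ^ (n : ℕ) : ℝ)⁻¹ *
    (∑ S ∈ (Finset.range (n : ℕ)).powerset, HS μ T α S) / (n : ℕ)

/-- The Kolmogorov–Sinai entropy of `T` relative to `α`:
`h_μ(X,α,T) = lim_n H_μ(α_{n^*})/n = inf_n H_μ(α_{n^*})/n`. -/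
noncomputable def entMu {X ι : Type*} [MeasurableSpace X] [Fintype ι]
    (μ : Measure X) (T : X → X) (α : X → ι) : ℝ :=
  ⨅ n : ℕ+, HS μ T α (Finset.range (n : ℕ)) / (n : ℕ)

open Real Finset Filter Topology
open scoped Pointwise

lemma Real.negMulLog_add_le {a b : ℝ} (ha : 0 ≤ a) (hb : 0 ≤ b) :
    negMulLog (a + b) ≤ negMulLog a + negMulLog b := by
  rcases ha.eq_or_lt with rfl | ha
  · simp
  rcases hb.eq_or_lt with rfl | hb
  · simp
  have hla : log a ≤ log (a + b) := log_le_log ha (by linarith)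
  have hlb : log b ≤ log (a + b) := log_le_log hb (by linarith)
  simp only [negMulLog, neg_mul]
  nlinarith

lemma Real.negMulLog_sum_le {ι : Type*} (s : Finset ι) {p : ι → ℝ}
    (hp : ∀ i ∈ s, 0 ≤ p i) :
    negMulLog (∑ i ∈ s, p i) ≤ ∑ i ∈ s, negMulLog (p i) :=
  le_sum_of_subadditive_on_pred negMulLog (0 ≤ ·) negMulLog_zero.le
    (fun _ _ ha hb => negMulLog_add_le ha hb) (fun _ _ => add_nonneg) p hp

/-- The pointwise form of Gibbs' inequality, from `log x ≤ x - 1` at `x = P Q / p`. -/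
lemma Real.mul_log_mul_div_le {p P Q : ℝ} (hp : 0 ≤ p) (hP : p ≤ P) (hQ : p ≤ Q) :
    p * (log P + log Q - log p) ≤ P * Q - p := by
  rcases hp.eq_or_lt with rfl | hp
  · simp only [zero_mul, sub_zero]; exact mul_nonneg hP hQ
  have hP0 : 0 < P := hp.trans_le hP
  have hQ0 : 0 < Q := hp.trans_le hQ
  have h := log_le_sub_one_of_pos (div_pos (mul_pos hP0 hQ0) hp)
  rw [log_div (mul_pos hP0 hQ0).ne' hp.ne', log_mul hP0.ne' hQ0.ne'] at h
  calc p * (log P + log Q - log p) ≤ p * (P * Q / p - 1) := by gcongr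
    _ = P * Q - p := by field_simp

lemma Real.sum_negMulLog_le_add {κ κ' : Type*} [Fintype κ] [Fintype κ'] {p : κ → κ' → ℝ}
    (hp : ∀ c d, 0 ≤ p c d) (hsum : ∑ c, ∑ d, p c d = 1) :
    ∑ c, ∑ d, negMulLog (p c d)
      ≤ ∑ c, negMulLog (∑ d, p c d) + ∑ d, negMulLog (∑ c, p c d) := by
  set P := fun c => ∑ d, p c d
  set Q := fun d => ∑ c, p c d
  have hQ : ∑ d, Q d = 1 := by rw [← hsum, sum_comm]
  have hgibbs : ∑ c, ∑ d, p c d * (log (P c) + log (Q d) - log (p c d)) ≤ 0 :=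
    calc _ ≤ ∑ c, ∑ d, (P c * Q d - p c d) :=
          sum_le_sum fun c _ => sum_le_sum fun d _ => mul_log_mul_div_le (hp c d)
            (single_le_sum (fun d _ => hp c d) (mem_univ d))
            (single_le_sum (f := fun c => p c d) (fun c _ => hp c d) (mem_univ c))
      _ = 0 := by simp only [sum_sub_distrib, ← mul_sum, ← sum_mul, hQ, hsum]; simp [P, hsum]
  have hP' : ∑ c, negMulLog (P c) = -∑ c, ∑ d, p c d * log (P c) := by
    simp only [negMulLog, P, neg_mul, sum_mul, sum_neg_distrib]
  have hQ' : ∑ d, negMulLog (Q d) = -∑ c, ∑ d, p c d * log (Q d) := by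
    simp only [negMulLog, Q, neg_mul, sum_mul, sum_neg_distrib]
    rw [sum_comm]
  simp only [mul_sub, mul_add, sum_add_distrib, sum_sub_distrib] at hgibbs
  show _ ≤ ∑ c, negMulLog (P c) + ∑ d, negMulLog (Q d)
  rw [hP', hQ']
  simp only [negMulLog, neg_mul, sum_neg_distrib]
  linarith

lemma Real.iSup_eq_iSup_of_forall_le_of_forall_exists_le {ι : Type*} {a c : ι → ℝ}
    (hle : ∀ i, a i ≤ c i) (hex : ∀ i, ∀ ε > 0, ∃ j, c i - ε ≤ a j) :
    ⨆ i, a i = ⨆ i, c i := by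
  rcases isEmpty_or_nonempty ι with hι | hι
  · simp [Real.iSup_of_isEmpty]
  by_cases hc : BddAbove (Set.range c)
  · obtain ⟨b, hb⟩ := hc
    have ha : BddAbove (Set.range a) :=
      ⟨b, by rintro _ ⟨i, rfl⟩; exact (hle i).trans (hb ⟨i, rfl⟩)⟩
    refine le_antisymm (ciSup_mono ⟨b, hb⟩ hle)
      (ciSup_le fun i => le_of_forall_pos_le_add fun ε hε => ?_)
    obtain ⟨j, hj⟩ := hex i ε hε
    linarith [le_ciSup ha j]
  · have ha : ¬BddAbove (Set.range a) := by
      rintro ⟨b, hb⟩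
      refine hc ⟨b + 1, ?_⟩
      rintro _ ⟨i, rfl⟩
      obtain ⟨j, hj⟩ := hex i 1 one_pos
      linarith [hb ⟨j, rfl⟩]
    rw [Real.iSup_of_not_bddAbove hc, Real.iSup_of_not_bddAbove ha]

lemma Real.iSup_iSup_eq_of_forall_le_of_forall_exists_le {ι : Type*} {κ : ι → Type*}
    {f g : ∀ i, κ i → ℝ} (hg : ∀ i, BddAbove (Set.range (g i)))
    (hle : ∀ i k, f i k ≤ g i k)
    (hex : ∀ i k, ∀ ε > 0, ∃ j l, g i k - ε ≤ f j l) :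
    ⨆ i, ⨆ k, f i k = ⨆ i, ⨆ k, g i k := by
  have hf (i : ι) : BddAbove (Set.range (f i)) :=
    let ⟨b, hb⟩ := hg i
    ⟨b, by rintro _ ⟨k, rfl⟩; exact (hle i k).trans (hb ⟨k, rfl⟩)⟩
  refine Real.iSup_eq_iSup_of_forall_le_of_forall_exists_le (fun i => ?_) fun i ε hε => ?_ <;>
    rcases isEmpty_or_nonempty (κ i) with hκ | hκ
  · simp [Real.iSup_of_isEmpty]
  · exact ciSup_mono (hg i) (hle i)
  · exact ⟨i, by simp [Real.iSup_of_isEmpty, hε.le]⟩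
  · obtain ⟨k, hk⟩ := exists_lt_of_lt_ciSup (sub_lt_self (⨆ k, g i k) (half_pos hε))
    obtain ⟨j, l, hl⟩ := hex i k (ε / 2) (half_pos hε)
    exact ⟨j, by linarith [le_ciSup (hf j) l]⟩

theorem Subadditive.tendsto_iInf {u : ℕ → ℝ} (h : Subadditive u)
    (hbdd : BddBelow (Set.range fun n => u n / n)) :
    Tendsto (fun n => u n / n) atTop (𝓝 (⨅ n : ℕ+, u n / (n : ℕ))) := by
  have hbdd' : BddBelow (Set.range fun n : ℕ+ => u n / (n : ℕ)) :=
    hbdd.mono <| by rintro _ ⟨n, rfl⟩; exact ⟨n, rfl⟩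
  have hlim : h.lim = ⨅ n : ℕ+, u n / (n : ℕ) :=
    le_antisymm (le_ciInf fun n => h.lim_le_div hbdd n.ne_zero)
      (ge_of_tendsto (h.tendsto_lim hbdd)
        (eventually_atTop.2 ⟨1, fun n hn => ciInf_le hbdd' ⟨n, hn⟩⟩))
  exact hlim ▸ h.tendsto_lim hbdd

lemma Finset.sum_powerset_union_of_disjoint {α M : Type*} [DecidableEq α] [AddCommMonoid M]
    {s t : Finset α} (hst : Disjoint s t) (f : Finset α → M) :
    ∑ S ∈ (s ∪ t).powerset, f S =
      ∑ A ∈ s.powerset, ∑ B ∈ t.powerset, f (A ∪ B) := by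
  rw [powerset_union]
  change ∑ S ∈ image₂ (· ⊔ ·) s.powerset t.powerset, f S = _
  rw [← image_uncurry_product, sum_image, sum_product]
  · rfl
  rintro ⟨A, B⟩ hAB ⟨A', B'⟩ hAB' h
  simp only [coe_product, Set.mem_prod, mem_coe, mem_powerset] at hAB hAB'
  have hA : ∀ {A B : Finset α}, A ⊆ s → B ⊆ t → (A ⊔ B) ∩ s = A := fun hA hB => by
    rw [sup_eq_union, union_inter_distrib_right, inter_eq_left.2 hA,
      disjoint_iff_inter_eq_empty.1 (hst.symm.mono_left hB), union_empty]
  have hB : ∀ {A B : Finset α}, A ⊆ s → B ⊆ t → (A ⊔ B) ∩ t = B := fun hA hB => by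
    rw [sup_eq_union, union_inter_distrib_right, inter_eq_left.2 hB,
      disjoint_iff_inter_eq_empty.1 (hst.mono_left hA), empty_union]
  simp only [Function.uncurry_apply_pair] at h
  exact Prod.ext ((hA hAB.1 hAB.2).symm.trans (h ▸ hA hAB'.1 hAB'.2))
    ((hB hAB.1 hAB.2).symm.trans (h ▸ hB hAB'.1 hAB'.2))

lemma card_filter_notMem_add_range_mul_two_pow {n k i : ℕ} (hki : k ≤ i) (hin : i < n) :
    #{S ∈ (range n).powerset | i ∉ S + range k} * 2 ^ k = 2 ^ n := by
  have hfilter : {S ∈ (range n).powerset | i ∉ S + range k}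
      = (range n \ Ioc (i - k) i).powerset := by
    ext S
    simp only [mem_filter, mem_powerset, Finset.mem_add, mem_range, subset_sdiff, not_exists,
      not_and, disjoint_left, mem_Ioc]
    exact and_congr_right fun _ => ⟨fun h s hs h1 h2 => h s hs (i - s) (by omega) (by omega),
      fun h s hs j hj hsj => h hs (by omega) (by omega)⟩
  have hsub : Ioc (i - k) i ⊆ range n := fun s hs => mem_range.2 (by simp at hs; omega)
  rw [hfilter, card_powerset, card_sdiff_of_subset hsub, card_range, Nat.card_Ioc, ← pow_add]
  congr 1
  omega

lemma sum_card_range_sdiff_add_range_mul_two_pow_le (n k : ℕ) :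
    (∑ S ∈ (range n).powerset, #(range n \ (S + range k))) * 2 ^ k
      ≤ 2 ^ n * (k * 2 ^ k + n) := by
  have hsplit (S : Finset ℕ) :
      #(range n \ (S + range k)) ≤ k + #{i ∈ Ico k n | i ∉ S + range k} :=
    calc #(range n \ (S + range k)) ≤ #(range k ∪ {i ∈ Ico k n | i ∉ S + range k}) := by
          refine card_le_card fun i hi => ?_
          obtain ⟨hin, hiS⟩ := Finset.mem_sdiff.mp hi
          by_cases hik : i < k
          · exact mem_union_left _ (mem_range.2 hik)
          · exact mem_union_right _
              (mem_filter.2 ⟨mem_Ico.2 ⟨by omega, mem_range.1 hin⟩, hiS⟩)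
      _ ≤ k + #{i ∈ Ico k n | i ∉ S + range k} := by grw [card_union_le, card_range]
  have hcount :
      (∑ S ∈ (range n).powerset, #{i ∈ Ico k n | i ∉ S + range k}) * 2 ^ k ≤ n * 2 ^ n :=
    calc _ = ∑ i ∈ Ico k n, #{S ∈ (range n).powerset | i ∉ S + range k} * 2 ^ k := by
          rw [← sum_mul]
          exact congrArg (· * 2 ^ k)
            (sum_card_bipartiteAbove_eq_sum_card_bipartiteBelow fun S i => i ∉ S + range k)
      _ = #(Ico k n) * 2 ^ n := by
          rw [← smul_eq_mul, ← sum_const]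
          exact sum_congr rfl fun i hi =>
            card_filter_notMem_add_range_mul_two_pow (mem_Ico.1 hi).1 (mem_Ico.1 hi).2
      _ ≤ n * 2 ^ n := by simp
  calc (∑ S ∈ (range n).powerset, #(range n \ (S + range k))) * 2 ^ k
      ≤ (∑ S ∈ (range n).powerset, (k + #{i ∈ Ico k n | i ∉ S + range k})) * 2 ^ k := by
        gcongr with S; exact hsplit S
    _ ≤ 2 ^ n * (k * 2 ^ k + n) := by
        rw [sum_add_distrib, add_mul, sum_const, card_powerset, card_range, smul_eq_mul]
        nlinarith [hcount]

section PartitionEntropy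

variable {X κ κ' : Type*} [MeasurableSpace X] [Fintype κ] [Fintype κ']
  (μ : Measure X)

lemma partEnt_nonneg [IsProbabilityMeasure μ] (f : X → κ) : 0 ≤ partEnt μ f :=
  sum_nonneg fun _ _ => negMulLog_nonneg measureReal_nonneg measureReal_le_one

lemma partEnt_le_card (f : X → κ) : partEnt μ f ≤ Fintype.card κ := by
  calc partEnt μ f ≤ ∑ _ : κ, (1 : ℝ) := sum_le_sum fun c _ =>
        (negMulLog_le_one_sub_self measureReal_nonneg).trans (sub_le_self 1 measureReal_nonneg)
    _ = Fintype.card κ := by simp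

lemma partEnt_of_subsingleton [IsProbabilityMeasure μ] [Subsingleton κ] (f : X → κ) :
    partEnt μ f = 0 := by
  refine sum_eq_zero fun c _ => ?_
  rw [show f ⁻¹' {c} = Set.univ from Set.eq_univ_of_forall fun x => Subsingleton.elim (f x) c]
  simp

variable [MeasurableSpace κ] [MeasurableSingletonClass κ] {f : X → κ}

lemma partEnt_comp_le [IsFiniteMeasure μ] (hf : Measurable f) (σ : κ → κ') :
    partEnt μ (σ ∘ f) ≤ partEnt μ f := by
  classical
  have hfiber (c' : κ') :
      μ.real ((σ ∘ f) ⁻¹' {c'}) = ∑ c with σ c = c', μ.real (f ⁻¹' {c}) := by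
    rw [sum_measureReal_preimage_singleton _ fun c _ => hf (measurableSet_singleton c)]
    congr 1
    ext x
    simp
  calc partEnt μ (σ ∘ f) = ∑ c', negMulLog (∑ c with σ c = c', μ.real (f ⁻¹' {c})) :=
        sum_congr rfl fun c' _ => by rw [← hfiber]; rfl
    _ ≤ ∑ c', ∑ c with σ c = c', negMulLog (μ.real (f ⁻¹' {c})) :=
        sum_le_sum fun c' _ => negMulLog_sum_le _ fun _ _ => measureReal_nonneg
    _ = partEnt μ f := sum_fiberwise _ _ _

lemma partEnt_eq_of_comp_eq [IsFiniteMeasure μ] [MeasurableSpace κ']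
    [MeasurableSingletonClass κ'] {g : X → κ'}
    (hf : Measurable f) (hg : Measurable g) (σ : κ' → κ) (τ : κ → κ')
    (hσ : σ ∘ g = f) (hτ : τ ∘ f = g) : partEnt μ f = partEnt μ g :=
  le_antisymm (hσ ▸ partEnt_comp_le μ hg σ) (hτ ▸ partEnt_comp_le μ hf τ)

lemma partEnt_prodMk_le [IsProbabilityMeasure μ] [MeasurableSpace κ']
    [MeasurableSingletonClass κ'] {g : X → κ'}
    (hf : Measurable f) (hg : Measurable g) :
    partEnt μ (fun x => (f x, g x)) ≤ partEnt μ f + partEnt μ g := by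
  set p : κ → κ' → ℝ := fun c d => μ.real ((fun x => (f x, g x)) ⁻¹' {(c, d)})
  have hfg : Measurable fun x => (f x, g x) := hf.prodMk hg
  have hpre (s : Finset (κ × κ')) : ∑ x ∈ s, μ.real ((fun x => (f x, g x)) ⁻¹' {x})
      = μ.real ((fun x => (f x, g x)) ⁻¹' s) :=
    sum_measureReal_preimage_singleton s fun x _ => hfg (measurableSet_singleton x)
  have hP (c : κ) : μ.real (f ⁻¹' {c}) = ∑ d, p c d := by
    have := hpre ({c} ×ˢ univ)
    rw [sum_product, sum_singleton] at this
    rw [this]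
    congr 1
    ext x
    simp [eq_comm]
  have hQ (d : κ') : μ.real (g ⁻¹' {d}) = ∑ c, p c d := by
    have := hpre (univ ×ˢ {d})
    rw [sum_product, sum_congr rfl fun c _ => sum_singleton _ _] at this
    rw [this]
    congr 1
    ext x
    simp [eq_comm]
  have hsum : ∑ c, ∑ d, p c d = 1 := by
    rw [← Fintype.sum_prod_type', hpre univ]
    simp
  calc partEnt μ (fun x => (f x, g x)) = ∑ c, ∑ d, negMulLog (p c d) := Fintype.sum_prod_type _
    _ ≤ ∑ c, negMulLog (∑ d, p c d) + ∑ d, negMulLog (∑ c, p c d) :=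
        sum_negMulLog_le_add (fun _ _ => measureReal_nonneg) hsum
    _ = partEnt μ f + partEnt μ g := by simp only [partEnt, ← measureReal_def, hP, hQ]

lemma partEnt_comp_iterate {T : X → X} (hT : MeasurePreserving T μ μ) (hf : Measurable f)
    (t : ℕ) : partEnt μ (f ∘ T^[t]) = partEnt μ f :=
  sum_congr rfl fun c _ => by
    rw [Set.preimage_comp, ← measureReal_def, ← measureReal_def,
      (hT.iterate t).measureReal_preimage (hf (measurableSet_singleton c)).nullMeasurableSet]

end PartitionEntropy

section OrbitEntropy

lemma measurable_iterate_tuple {X ι : Type*} [MeasurableSpace X] [MeasurableSpace ι]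
    {T : X → X} {α : X → ι} (hT : Measurable T) (hα : Measurable α) (S : Finset ℕ) :
    Measurable fun x (i : {i // i ∈ S}) => α (T^[(i : ℕ)] x) :=
  measurable_pi_lambda _ fun i => hα.comp (hT.iterate i)

variable {X ι : Type*} [MeasurableSpace X] [Fintype ι] {μ : Measure X} [IsProbabilityMeasure μ]
  {T : X → X} {α : X → ι}

lemma HS_nonneg (S : Finset ℕ) : 0 ≤ HS μ T α S := partEnt_nonneg μ _

lemma HS_empty : HS μ T α ∅ = 0 := partEnt_of_subsingleton μ _

variable [MeasurableSpace ι] [MeasurableSingletonClass ι]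

lemma HS_mono (hT : Measurable T) (hα : Measurable α) {S S' : Finset ℕ} (h : S ⊆ S') :
    HS μ T α S ≤ HS μ T α S' :=
  partEnt_comp_le μ (measurable_iterate_tuple hT hα S')
    fun u (i : {i // i ∈ S}) => u ⟨i, h i.2⟩

lemma HS_union_le (hT : Measurable T) (hα : Measurable α) (S S' : Finset ℕ) :
    HS μ T α (S ∪ S') ≤ HS μ T α S + HS μ T α S' := by
  let glue (z : ({i // i ∈ S} → ι) × ({i // i ∈ S'} → ι)) (a : {i // i ∈ S ∪ S'}) :
      ι :=
    if h : (a : ℕ) ∈ S then z.1 ⟨a, h⟩ else z.2 ⟨a, (mem_union.mp a.2).resolve_left h⟩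
  calc HS μ T α (S ∪ S')
      = partEnt μ (glue ∘ fun x => (fun i : {i // i ∈ S} => α (T^[(i : ℕ)] x),
          fun i : {i // i ∈ S'} => α (T^[(i : ℕ)] x))) := by
        unfold HS
        congr
        funext x i
        simp only [Function.comp_apply, glue]
        split_ifs <;> rfl
    _ ≤ _ := partEnt_comp_le μ
        ((measurable_iterate_tuple hT hα S).prodMk (measurable_iterate_tuple hT hα S')) glue
    _ ≤ HS μ T α S + HS μ T α S' := partEnt_prodMk_le μ
        (measurable_iterate_tuple hT hα S) (measurable_iterate_tuple hT hα S')

lemma HS_map_addLeftEmbedding (hT : MeasurePreserving T μ μ) (hα : Measurable α)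
    (S : Finset ℕ) (t : ℕ) : HS μ T α (S.map (addLeftEmbedding t)) = HS μ T α S := by
  have hshift (a : {a // a ∈ S.map (addLeftEmbedding t)}) : (a : ℕ) - t ∈ S ∧ t ≤ a := by
    obtain ⟨a, ha⟩ := a
    obtain ⟨s, hs, rfl⟩ := mem_map.mp ha
    simpa using hs
  calc HS μ T α (S.map (addLeftEmbedding t))
      = partEnt μ ((fun x (i : {i // i ∈ S}) => α (T^[(i : ℕ)] x)) ∘ T^[t]) := by
        refine partEnt_eq_of_comp_eq μ (measurable_iterate_tuple hT.measurable hα _)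
          ((measurable_iterate_tuple hT.measurable hα S).comp (hT.measurable.iterate t))
          (fun u a => u ⟨a - t, (hshift a).1⟩)
          (fun v i => v ⟨t + i, mem_map_of_mem _ i.2⟩) ?_ ?_ <;>
        funext x i <;>
        simp only [Function.comp_apply, ← Function.iterate_add_apply]
        · rw [Nat.sub_add_cancel (hshift i).2]
        · rw [add_comm]
    _ = HS μ T α S := partEnt_comp_iterate μ hT (measurable_iterate_tuple hT.measurable hα S) t

lemma HS_singleton (hT : MeasurePreserving T μ μ) (hα : Measurable α) (j : ℕ) :
    HS μ T α {j} = partEnt μ α := by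
  calc HS μ T α {j} = partEnt μ (α ∘ T^[j]) :=
        partEnt_eq_of_comp_eq μ (measurable_iterate_tuple hT.measurable hα _)
          (hα.comp (hT.measurable.iterate j)) (fun c _ => c)
          (fun u => u ⟨j, mem_singleton_self j⟩)
          (by funext x i; rw [Function.comp_apply, mem_singleton.mp i.2]; rfl) rfl
    _ = partEnt μ α := partEnt_comp_iterate μ hT hα j

lemma HS_le_card_mul (hT : MeasurePreserving T μ μ) (hα : Measurable α) (S : Finset ℕ) :
    HS μ T α S ≤ #S * partEnt μ α := by
  induction S using Finset.induction_on with
  | empty => simp [HS_empty]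
  | insert j S hj ih =>
    calc HS μ T α (insert j S) ≤ HS μ T α {j} + HS μ T α S := by
          rw [insert_eq]; exact HS_union_le hT.measurable hα {j} S
      _ ≤ partEnt μ α + #S * partEnt μ α := by rw [HS_singleton hT hα]; linarith
      _ = #(insert j S) * partEnt μ α := by rw [card_insert_of_notMem hj]; push_cast; ring

lemma HS_le_add_card_sdiff_mul (hT : MeasurePreserving T μ μ) (hα : Measurable α)
    (A B : Finset ℕ) : HS μ T α B ≤ HS μ T α A + #(B \ A) * partEnt μ α :=
  calc HS μ T α B ≤ HS μ T α (A ∪ B \ A) := HS_mono hT.measurable hα (by simp)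
    _ ≤ HS μ T α A + HS μ T α (B \ A) := HS_union_le hT.measurable hα _ _
    _ ≤ _ := by linarith [HS_le_card_mul hT hα (B \ A)]

lemma HS_range_add_le (hT : MeasurePreserving T μ μ) (hα : Measurable α) (a b : ℕ) :
    HS μ T α (range (a + b)) ≤ HS μ T α (range a) + HS μ T α (range b) := by
  rw [range_add, ← HS_map_addLeftEmbedding hT hα (range b) a]
  exact HS_union_le hT.measurable hα _ _

end OrbitEntropy

/-- `ascMu μ T α` is definitionally `⨅ n : ℕ+, avgHS μ T α n / n`. -/
noncomputable def avgHS {X ι : Type*} [MeasurableSpace X] [Fintype ι]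
    (μ : Measure X) (T : X → X) (α : X → ι) (n : ℕ) : ℝ :=
  (2 ^ n : ℝ)⁻¹ * ∑ S ∈ (range n).powerset, HS μ T α S

section Limits

variable {X ι : Type*} [MeasurableSpace X] [Fintype ι] [MeasurableSpace ι]
  [MeasurableSingletonClass ι] {μ : Measure X} [IsProbabilityMeasure μ]
  {T : X → X} {α : X → ι}
  (hT : MeasurePreserving T μ μ) (hα : Measurable α)
include hT hα

lemma avgHS_add_le (m n : ℕ) : avgHS μ T α (m + n) ≤ avgHS μ T α m + avgHS μ T α n := by
  have hsum : ∑ S ∈ (range (m + n)).powerset, HS μ T α S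
      ≤ 2 ^ n * ∑ A ∈ (range m).powerset, HS μ T α A
        + 2 ^ m * ∑ B ∈ (range n).powerset, HS μ T α B :=
    calc ∑ S ∈ (range (m + n)).powerset, HS μ T α S
        = ∑ A ∈ (range m).powerset, ∑ B ∈ (range n).powerset,
            HS μ T α (A ∪ B.map (addLeftEmbedding m)) := by
          rw [range_add, sum_powerset_union_of_disjoint (disjoint_range_addLeftEmbedding m _),
            map_eq_image, powerset_image]
          refine sum_congr rfl fun A _ => ?_
          rw [sum_image (image_injOn_powerset_of_injOn (addLeftEmbedding m).injective.injOn)]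
          simp only [map_eq_image]
      _ ≤ ∑ A ∈ (range m).powerset, ∑ B ∈ (range n).powerset,
            (HS μ T α A + HS μ T α B) := by
          gcongr with A _ B _
          grw [HS_union_le hT.measurable hα, HS_map_addLeftEmbedding hT hα]
      _ = _ := by simp [sum_add_distrib, ← mul_sum, sum_comm (t := (range n).powerset)]
  calc avgHS μ T α (m + n)
      ≤ (2 ^ (m + n) : ℝ)⁻¹ * (2 ^ n * ∑ A ∈ (range m).powerset, HS μ T α A
          + 2 ^ m * ∑ B ∈ (range n).powerset, HS μ T α B) := by
        unfold avgHS; gcongr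
    _ = avgHS μ T α m + avgHS μ T α n := by
        unfold avgHS; rw [pow_add]; field_simp

lemma tendsto_HS_range_div_entMu :
    Tendsto (fun n => HS μ T α (range n) / n) atTop (𝓝 (entMu μ T α)) :=
  Subadditive.tendsto_iInf (fun m n => HS_range_add_le hT hα m n)
    ⟨0, by rintro _ ⟨n, rfl⟩; exact div_nonneg (HS_nonneg _) n.cast_nonneg⟩

lemma tendsto_avgHS_div_ascMu :
    Tendsto (fun n => avgHS μ T α n / n) atTop (𝓝 (ascMu μ T α)) :=
  Subadditive.tendsto_iInf (fun m n => avgHS_add_le hT hα m n)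
    ⟨0, by
      rintro _ ⟨n, rfl⟩
      exact div_nonneg (mul_nonneg (by positivity) (sum_nonneg fun S _ => HS_nonneg S))
        n.cast_nonneg⟩

lemma avgHS_le_HS_range (n : ℕ) : avgHS μ T α n ≤ HS μ T α (range n) := by
  have h := sum_le_card_nsmul (range n).powerset (HS μ T α) (HS μ T α (range n))
    fun S hS => HS_mono hT.measurable hα (mem_powerset.mp hS)
  rw [card_powerset, card_range, nsmul_eq_mul] at h
  unfold avgHS
  rw [inv_mul_le_iff₀ (by positivity)]
  exact_mod_cast h

lemma ascMu_le_entMu : ascMu μ T α ≤ entMu μ T α :=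
  le_of_tendsto_of_tendsto' (tendsto_avgHS_div_ascMu hT hα) (tendsto_HS_range_div_entMu hT hα)
    fun n => div_le_div_of_nonneg_right (avgHS_le_HS_range hT hα n) n.cast_nonneg

lemma entMu_le_partEnt : entMu μ T α ≤ partEnt μ α :=
  le_of_tendsto' (tendsto_HS_range_div_entMu hT hα) fun n =>
    div_le_of_le_mul₀ n.cast_nonneg (partEnt_nonneg μ α)
      (by simpa [mul_comm] using HS_le_card_mul hT hα (range n))

end Limits

/-- The refined partition `α_{k^*} = α ∨ T⁻¹α ∨ ⋯ ∨ T^{-(k-1)}α`. -/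
def refinement {X ι : Type*} (T : X → X) (α : X → ι) (k : ℕ) : X → (Fin k → ι) :=
  fun x j => α (T^[j] x)

section Refinement

variable {X ι : Type*} [MeasurableSpace X] [Fintype ι] [MeasurableSpace ι]
  [MeasurableSingletonClass ι] {μ : Measure X} [IsProbabilityMeasure μ]
  {T : X → X} {α : X → ι}

omit [Fintype ι] [MeasurableSingletonClass ι] in
lemma measurable_refinement (hT : Measurable T) (hα : Measurable α) (k : ℕ) :
    Measurable (refinement T α k) :=
  measurable_pi_lambda _ fun j => hα.comp (hT.iterate j)

lemma HS_refinement (hT : Measurable T) (hα : Measurable α) (k : ℕ) (S : Finset ℕ) :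
    HS μ T (refinement T α k) S = HS μ T α (S + range k) := by
  have hdecomp (a : {a // a ∈ S + range k}) : ∃ s ∈ S, ∃ j ∈ range k, s + j = a :=
    Finset.mem_add.mp a.2
  choose s hs j hj hsj using hdecomp
  refine partEnt_eq_of_comp_eq μ (measurable_iterate_tuple hT (measurable_refinement hT hα k) S)
    (measurable_iterate_tuple hT hα _)
    (fun v i l => v ⟨i + l, add_mem_add i.2 (mem_range.2 l.2)⟩)
    (fun u a => u ⟨s a, hs a⟩ ⟨j a, mem_range.1 (hj a)⟩) ?_ ?_
  · funext x a l
    simp only [Function.comp_apply, refinement, ← Function.iterate_add_apply, add_comm]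
  · funext x a
    simp only [Function.comp_apply, refinement, ← Function.iterate_add_apply]
    rw [add_comm, hsj]

variable (hT : MeasurePreserving T μ μ) (hα : Measurable α)
include hT hα

lemma entMu_refinement_le (k : ℕ) : entMu μ T (refinement T α k) ≤ entMu μ T α := by
  have hle (n : ℕ) : HS μ T (refinement T α k) (range n)
      ≤ HS μ T α (range n) + HS μ T α (range k) := by
    rw [HS_refinement hT.measurable hα]
    refine (HS_mono hT.measurable hα fun i hi => ?_).trans (HS_range_add_le hT hα n k)
    obtain ⟨s, hs, j, hj, rfl⟩ := Finset.mem_add.mp hi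
    simp only [mem_range] at hs hj ⊢
    omega
  have hlim : Tendsto (fun n : ℕ => (HS μ T α (range n) + HS μ T α (range k)) / n) atTop
      (𝓝 (entMu μ T α)) := by
    simpa [add_div] using (tendsto_HS_range_div_entMu hT hα).add
      (tendsto_const_div_atTop_nhds_zero_nat (HS μ T α (range k)))
  exact le_of_tendsto_of_tendsto' (tendsto_HS_range_div_entMu hT
    (measurable_refinement hT.measurable hα k)) hlim
    fun n => div_le_div_of_nonneg_right (hle n) n.cast_nonneg

/-- Each `S ⊆ {0,…,n-1}` loses at most `H_μ(α)` for every point of `{0,…,n-1}` missed by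
`S + k^*`, and on average `S + k^*` misses at most `k + n/2^k` points. -/
lemma HS_range_sub_le_avgHS_refinement (n k : ℕ) :
    HS μ T α (range n) - partEnt μ α * (k + n / 2 ^ k)
      ≤ avgHS μ T (refinement T α k) n := by
  have hmiss : (∑ S ∈ (range n).powerset, (#(range n \ (S + range k)) : ℝ))
      ≤ 2 ^ n * (k + n / 2 ^ k) := by
    have h := sum_card_range_sdiff_add_range_mul_two_pow_le n k
    rw [← Nat.cast_le (α := ℝ)] at h
    push_cast at h
    rw [← le_div_iff₀ (by positivity)] at h
    calc _ ≤ _ := h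
      _ = 2 ^ n * (k + n / 2 ^ k) := by field_simp
  have hS (S : Finset ℕ) : HS μ T α (range n) - #(range n \ (S + range k)) * partEnt μ α
      ≤ HS μ T (refinement T α k) S := by
    rw [HS_refinement hT.measurable hα]
    linarith [HS_le_add_card_sdiff_mul hT hα (S + range k) (range n)]
  have hsum := sum_le_sum fun S (_ : S ∈ (range n).powerset) => hS S
  rw [sum_sub_distrib, sum_const, card_powerset, card_range, nsmul_eq_mul, ← sum_mul] at hsum
  unfold avgHS
  rw [le_inv_mul_iff₀ (by positivity)]
  push_cast at hsum
  nlinarith [partEnt_nonneg μ α]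

lemma entMu_sub_le_ascMu_refinement (k : ℕ) :
    entMu μ T α - partEnt μ α / 2 ^ k ≤ ascMu μ T (refinement T α k) := by
  have hlim : Tendsto
      (fun n : ℕ => HS μ T α (range n) / n - partEnt μ α * (k / n + 1 / 2 ^ k)) atTop
      (𝓝 (entMu μ T α - partEnt μ α / 2 ^ k)) := by
    convert (tendsto_HS_range_div_entMu hT hα).sub (tendsto_const_nhds.mul
      ((tendsto_const_div_atTop_nhds_zero_nat (k : ℝ)).add tendsto_const_nhds)) using 2
    ring
  refine le_of_tendsto_of_tendsto hlim (tendsto_avgHS_div_ascMu hT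
    (measurable_refinement hT.measurable hα k)) (eventually_atTop.2 ⟨1, fun n hn => ?_⟩)
  have hn : (0 : ℝ) < n := by exact_mod_cast hn
  calc HS μ T α (range n) / n - partEnt μ α * (k / n + 1 / 2 ^ k)
      = (HS μ T α (range n) - partEnt μ α * (k + n / 2 ^ k)) / n := by field_simp
    _ ≤ _ := div_le_div_of_nonneg_right (HS_range_sub_le_avgHS_refinement hT hα n k) hn.le

end Refinement

section Relabel

variable {X ι ι' : Type*} [MeasurableSpace X] [Fintype ι] [MeasurableSpace ι]
  [MeasurableSingletonClass ι] [Fintype ι'] [MeasurableSpace ι'] [MeasurableSingletonClass ι']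
  {μ : Measure X} [IsProbabilityMeasure μ] {T : X → X} {α : X → ι}

lemma HS_equiv_comp (hT : Measurable T) (hα : Measurable α) (e : ι ≃ ι') (S : Finset ℕ) :
    HS μ T (e ∘ α) S = HS μ T α S :=
  partEnt_eq_of_comp_eq μ
    (measurable_iterate_tuple hT ((measurable_of_countable e).comp hα) S)
    (measurable_iterate_tuple hT hα S) (fun u i => e (u i)) (fun u i => e.symm (u i))
    rfl (by funext x i; simp)

lemma ascMu_equiv_comp (hT : Measurable T) (hα : Measurable α) (e : ι ≃ ι') :
    ascMu μ T (e ∘ α) = ascMu μ T α := by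
  simp only [ascMu, HS_equiv_comp hT hα e]

lemma entMu_equiv_comp (hT : Measurable T) (hα : Measurable α) (e : ι ≃ ι') :
    entMu μ T (e ∘ α) = entMu μ T α := by
  simp only [entMu, HS_equiv_comp hT hα e]

end Relabel

lemma exists_fin_entMu_sub_le_ascMu {X : Type*} [MeasurableSpace X] {μ : Measure X}
    [IsProbabilityMeasure μ] {T : X → X} (hT : MeasurePreserving T μ μ) {m : ℕ}
    {α : X → Fin m} (hα : Measurable α) {ε : ℝ} (hε : 0 < ε) :
    ∃ (m' : ℕ) (β : {f : X → Fin m' // Measurable f}),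
      entMu μ T α - ε ≤ ascMu μ T β.1 ∧ entMu μ T β.1 ≤ entMu μ T α := by
  have hH := partEnt_nonneg μ α
  obtain ⟨k, hk⟩ := exists_pow_lt_of_lt_one (div_pos hε (by linarith : 0 < partEnt μ α + 1))
    (by norm_num : (1 / 2 : ℝ) < 1)
  have hsmall : partEnt μ α / 2 ^ k ≤ ε :=
    calc partEnt μ α / 2 ^ k ≤ (partEnt μ α + 1) * (1 / 2) ^ k := by
          rw [one_div_pow, mul_one_div]; gcongr; linarith
      _ ≤ ε := ((lt_div_iff₀' (by linarith)).1 hk).le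
  refine ⟨m ^ k, ⟨finFunctionFinEquiv ∘ refinement T α k,
    (measurable_of_countable _).comp (measurable_refinement hT.measurable hα k)⟩, ?_, ?_⟩
  · rw [ascMu_equiv_comp hT.measurable (measurable_refinement hT.measurable hα k)]
    linarith [entMu_sub_le_ascMu_refinement hT hα k]
  · rw [entMu_equiv_comp hT.measurable (measurable_refinement hT.measurable hα k)]
    exact entMu_refinement_le hT hα k

/-- With `c_S^n = 2^{-n}`, the supremum of `Asc_μ(X,α,T)` over all
finite measurable partitions `α` equals the Kolmogorov–Sinai entropy
`h_μ(X,T) = sup_α h_μ(X,α,T)`, and likewise for the measure-theoretic intricacy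
`Int_μ(X,α,T) = 2·Asc_μ(X,α,T) − h_μ(X,α,T)`. -/
theorem sup_ascMu_eq_entropy {X : Type*} [MeasurableSpace X]
    (μ : Measure X) [IsProbabilityMeasure μ]
    (T : X → X) (hT : MeasurePreserving T μ μ) :
    (⨆ m : ℕ, ⨆ α : {f : X → Fin m // Measurable f}, ascMu μ T α.1)
      = (⨆ m : ℕ, ⨆ α : {f : X → Fin m // Measurable f}, entMu μ T α.1) ∧
    (⨆ m : ℕ, ⨆ α : {f : X → Fin m // Measurable f},
        (2 * ascMu μ T α.1 - entMu μ T α.1))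
      = (⨆ m : ℕ, ⨆ α : {f : X → Fin m // Measurable f}, entMu μ T α.1) := by
  have hle (m : ℕ) (α : {f : X → Fin m // Measurable f}) :
      ascMu μ T α.1 ≤ entMu μ T α.1 :=
    ascMu_le_entMu hT α.2
  have hbdd (m : ℕ) : BddAbove (Set.range fun α : {f : X → Fin m // Measurable f} =>
      entMu μ T α.1) :=
    ⟨m, by
      rintro _ ⟨α, rfl⟩
      simpa using (entMu_le_partEnt hT α.2).trans (partEnt_le_card μ α.1)⟩
  refine ⟨Real.iSup_iSup_eq_of_forall_le_of_forall_exists_le hbdd hle fun m α ε hε => ?_,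
    Real.iSup_iSup_eq_of_forall_le_of_forall_exists_le hbdd
      (fun m α => by linarith [hle m α]) fun m α ε hε => ?_⟩
  · obtain ⟨m', β, hasc, -⟩ := exists_fin_entMu_sub_le_ascMu hT α.2 hε
    exact ⟨m', β, hasc⟩
  · obtain ⟨m', β, hasc, hent⟩ := exists_fin_entMu_sub_le_ascMu hT α.2 (half_pos hε)
    exact ⟨m', β, by linarith⟩
end
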